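/- arXiv:2005.10174 — 4 statements merged into one kernel-verified Lean document; each statement's English description precedes it below -/
import Mathlib

section
/- Let A be a real symmetric positive semidefinite n×n matrix and let p ≥ 1 be an integer. On a probability space, let w_1, …, w_M be independent random vectors in ℝ^n whose n·M scalar entries are i.i.d. standard normal (mean 0, variance 1), and set X_M^p = (1/M) Σ_{j=1}^M w_jᵀ A^p w_j. Then E[X_M^p] = tr(A^p) = ‖A‖_p^p and Var(X_M^p) = 2‖A^p‖_F²/M. -/
open MeasureTheory ProbabilityTheory Matrix

namespace SVTEAux

open Real Filter
open scoped ENNReal NNReal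

noncomputable def gI (k : ℕ) : ℝ := ∫ x : ℝ, x ^ k * Real.exp (-(1/2) * x ^ 2)

lemma integrable_pow_gauss (k : ℕ) :
    Integrable fun x : ℝ => x ^ k * Real.exp (-(1/2) * x ^ 2) := by
  have := integrable_rpow_mul_exp_neg_mul_sq (b := 1/2) (by norm_num) (s := (k : ℝ))
      (lt_of_lt_of_le neg_one_lt_zero (Nat.cast_nonneg k))
  simpa [Real.rpow_natCast] using this

lemma gI_zero : gI 0 = Real.sqrt (2 * Real.pi) := by
  have := integral_gaussian (1/2)
  simp only [gI, pow_zero, one_mul]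
  rw [this, show Real.pi / (1/2) = 2 * Real.pi by ring]

lemma hasDerivAt_negexp (x : ℝ) :
    HasDerivAt (fun x : ℝ => -Real.exp (-(1/2) * x ^ 2))
      (x * Real.exp (-(1/2) * x ^ 2)) x := by
  have h1 : HasDerivAt (fun x : ℝ => -(1/2) * x ^ 2) (-(1/2) * (2 * x)) x := by
    simpa using ((hasDerivAt_pow 2 x).const_mul (-(1/2) : ℝ))
  have h2 := (h1.exp).fun_neg
  refine h2.congr_deriv ?_
  ring

lemma tendsto_pow_gauss_atTop (m : ℕ) :
    Tendsto (fun x : ℝ => x ^ m * Real.exp (-(1/2) * x ^ 2)) atTop (nhds 0) := by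
  have h := rpow_mul_exp_neg_mul_sq_isLittleO_exp_neg (b := (1/2)) (by norm_num) (m : ℝ)
  have h2 : Tendsto (fun x : ℝ => Real.exp (-(1/2) * x)) atTop (nhds 0) :=
    Real.tendsto_exp_atBot.comp ((tendsto_const_mul_atBot_of_neg (by norm_num)).2 tendsto_id)
  have h3 := h.trans_tendsto h2
  have : (fun x : ℝ => x ^ (m:ℝ) * Real.exp (-(1/2) * x ^ 2))
      = fun x : ℝ => x ^ m * Real.exp (-(1/2) * x ^ 2) := by
    funext x; rw [Real.rpow_natCast]
  rwa [this] at h3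

lemma tendsto_pow_gauss_atBot (m : ℕ) :
    Tendsto (fun x : ℝ => x ^ m * Real.exp (-(1/2) * x ^ 2)) atBot (nhds 0) := by
  have h := ((tendsto_pow_gauss_atTop m).comp tendsto_neg_atBot_atTop).const_mul ((-1:ℝ) ^ m)
  rw [mul_zero] at h
  apply h.congr
  intro x
  simp only [Function.comp_apply]
  rw [show ((-1:ℝ)^m * ((-x) ^ m * Real.exp (-(1/2) * (-x) ^ 2)))
    = ((-1)*(-x)) ^ m * Real.exp (-(1/2) * (-x)^2) by rw [mul_pow]; ring]
  norm_num

lemma gI_one : gI 1 = 0 := by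
  have h := integral_of_hasDerivAt_of_tendsto (f := fun x : ℝ => -Real.exp (-(1/2) * x ^ 2))
    (f' := fun x : ℝ => x * Real.exp (-(1/2) * x ^ 2)) (fun x => hasDerivAt_negexp x)
    (by simpa [pow_one] using integrable_pow_gauss 1)
    (by simpa [pow_zero] using (tendsto_pow_gauss_atBot 0).neg)
    (by simpa [pow_zero] using (tendsto_pow_gauss_atTop 0).neg)
  simpa [gI, pow_one] using h

lemma gI_rec (k : ℕ) : gI (k + 2) = ((k:ℝ) + 1) * gI k := by
  have hu : ∀ x : ℝ, HasDerivAt (fun x : ℝ => x ^ (k+1)) (((k:ℝ)+1) * x ^ k) x := by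
    intro x; simpa using hasDerivAt_pow (k+1) x
  have hbot : Tendsto (fun x : ℝ => x ^ (k+1) * -Real.exp (-(1/2) * x ^ 2)) atBot (nhds 0) := by
    have := (tendsto_pow_gauss_atBot (k+1)).neg
    rw [neg_zero] at this
    apply this.congr; intro x; ring
  have htop : Tendsto (fun x : ℝ => x ^ (k+1) * -Real.exp (-(1/2) * x ^ 2)) atTop (nhds 0) := by
    have := (tendsto_pow_gauss_atTop (k+1)).neg
    rw [neg_zero] at this
    apply this.congr; intro x; ring
  have h := integral_mul_deriv_eq_deriv_mul (u := fun x : ℝ => x ^ (k+1))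
    (u' := fun x : ℝ => ((k:ℝ)+1) * x ^ k)
    (v := fun x : ℝ => -Real.exp (-(1/2) * x ^ 2))
    (v' := fun x : ℝ => x * Real.exp (-(1/2) * x ^ 2))
    (fun x _ => hu x) (fun x _ => hasDerivAt_negexp x)
    (by
      have := integrable_pow_gauss (k + 2)
      apply this.congr
      filter_upwards with x
      simp only [Pi.mul_apply]; ring)
    (by
      have := (integrable_pow_gauss k).const_mul (((k:ℝ)+1))
      apply (this.neg).congr
      filter_upwards with x
      simp only [Pi.mul_apply, Pi.neg_apply]; ring)
    (a' := 0) (b' := 0) hbot htop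
  have e1 : ∫ x : ℝ, x ^ (k+1) * (x * Real.exp (-(1/2) * x ^ 2)) = gI (k+2) := by
    unfold gI; congr 1; funext x; ring
  have e2 : ∫ x : ℝ, ((k:ℝ)+1) * x ^ k * -Real.exp (-(1/2) * x ^ 2)
      = -(((k:ℝ)+1) * gI k) := by
    unfold gI
    rw [← MeasureTheory.integral_const_mul, ← integral_neg]
    congr 1; funext x; ring
  rw [e1, e2] at h
  rw [h]; ring

lemma gI_two : gI 2 = Real.sqrt (2 * Real.pi) := by
  have := gI_rec 0; rw [gI_zero] at this; simpa using this

lemma gI_three : gI 3 = 0 := by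
  have := gI_rec 1; rw [gI_one] at this; simpa using this

lemma gI_four : gI 4 = 3 * Real.sqrt (2 * Real.pi) := by
  have := gI_rec 2; rw [gI_two] at this; rw [this]; ring

lemma sqrt2pi_ne : Real.sqrt (2 * π) ≠ 0 :=
  Real.sqrt_ne_zero'.mpr (by positivity)

lemma gauss_pdf_eq (x : ℝ) :
    gaussianPDFReal 0 1 x = (Real.sqrt (2 * π))⁻¹ * Real.exp (-(1/2) * x ^ 2) := by
  unfold gaussianPDFReal
  push_cast
  rw [mul_one, sub_zero, show -x^2/(2*1) = -(1/2)*x^2 by ring]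

lemma integrable_pow_gaussianReal (k : ℕ) :
    Integrable (fun x => x ^ k) (gaussianReal 0 1) := by
  rw [gaussianReal_of_var_ne_zero _ one_ne_zero,
    integrable_withDensity_iff (measurable_gaussianPDF _ _)
      (Filter.Eventually.of_forall fun x => ENNReal.ofReal_lt_top)]
  have h := (integrable_pow_gauss k).const_mul (Real.sqrt (2 * π))⁻¹
  apply h.congr
  filter_upwards with x
  rw [gaussianPDF, ENNReal.toReal_ofReal (gaussianPDFReal_nonneg _ _ _), gauss_pdf_eq]
  ring

lemma integral_pow_gaussianReal (k : ℕ) :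
    ∫ x, x ^ k ∂(gaussianReal 0 1) = (Real.sqrt (2 * π))⁻¹ * gI k := by
  rw [gaussianReal_of_var_ne_zero _ one_ne_zero]
  have hd : gaussianPDF 0 1 = fun x => (((gaussianPDFReal 0 1 x).toNNReal : ℝ≥0) : ℝ≥0∞) := by
    funext x; rfl
  rw [hd, integral_withDensity_eq_integral_smul
    ((measurable_gaussianPDFReal 0 1).real_toNNReal) (fun x => x ^ k)]
  rw [gI, ← MeasureTheory.integral_const_mul]
  congr 1; funext x
  rw [NNReal.smul_def, smul_eq_mul, Real.coe_toNNReal _ (gaussianPDFReal_nonneg _ _ _),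
    gauss_pdf_eq]
  ring

section Indep

set_option linter.unusedSectionVars false

variable {Ω : Type*} [MeasureSpace Ω] [IsProbabilityMeasure (ℙ : Measure Ω)]
variable {ι : Type*} {Z : ι → Ω → ℝ}

lemma indep_prod_integral (hm : ∀ i, Measurable (Z i))
    (hi : iIndepFun Z ℙ) (e : ι → ℕ) (s : Finset ι) :
    ∫ ω, ∏ i ∈ s, Z i ω ^ e i ∂ℙ = ∏ i ∈ s, ∫ ω, Z i ω ^ e i ∂ℙ := by
  classical
  have hY : iIndepFun (fun i ω => Z i ω ^ e i) ℙ :=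
    hi.comp (fun i x => x ^ e i) (fun i => measurable_id.pow_const (e i))
  have hYm : ∀ i, Measurable fun ω => Z i ω ^ e i := fun i => (hm i).pow_const (e i)
  induction s using Finset.induction_on with
  | empty => simp
  | insert a s hns ih =>
    simp only [Finset.prod_insert hns]
    rw [← ih]
    have hP : (∏ j ∈ s, fun ω => Z j ω ^ e j) = fun ω => ∏ i ∈ s, Z i ω ^ e i := by
      funext ω; simp
    have hindep := (hY.indepFun_finsetProd_of_notMem hYm hns).symm
    have h2 := hindep.integral_mul_eq_mul_integral (hYm a).aestronglyMeasurable
        (by rw [hP]; exact (Finset.measurable_prod s (fun i _ => hYm i)).aestronglyMeasurable)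
    rw [hP] at h2
    have h3 : ((fun ω => Z a ω ^ e a) * fun ω => ∏ i ∈ s, Z i ω ^ e i)
        = fun ω => Z a ω ^ e a * ∏ i ∈ s, Z i ω ^ e i := rfl
    rw [h3] at h2
    exact h2

variable (hm : ∀ i, Measurable (Z i))
    (hi : iIndepFun Z ℙ)
    (hl : ∀ i, Measure.map (Z i) ℙ = gaussianReal 0 1)

section Moments
include hm hl

lemma intZpow (k : ℕ) (i : ι) : Integrable (fun ω => Z i ω ^ k) ℙ := by
  have h := integrable_pow_gaussianReal k
  rw [← hl i] at h
  have := (integrable_map_measure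
    (by apply (measurable_id.pow_const k).aestronglyMeasurable)
    (hm i).aemeasurable).mp h
  simpa [Function.comp_def] using this

lemma moZpow (k : ℕ) (i : ι) : ∫ ω, Z i ω ^ k ∂ℙ = (Real.sqrt (2 * π))⁻¹ * gI k := by
  rw [← integral_pow_gaussianReal k, ← hl i,
    integral_map (hm i).aemeasurable
      (by apply (measurable_id.pow_const k).aestronglyMeasurable)]

lemma moZ1 (i : ι) : ∫ ω, Z i ω ^ (1:ℕ) ∂ℙ = 0 := by
  have := moZpow hm hl 1 i; simpa [gI_one] using this

lemma moZ2 (i : ι) : ∫ ω, Z i ω ^ (2:ℕ) ∂ℙ = 1 := by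
  rw [moZpow hm hl 2 i, gI_two, inv_mul_cancel₀ sqrt2pi_ne]

lemma moZ3 (i : ι) : ∫ ω, Z i ω ^ (3:ℕ) ∂ℙ = 0 := by
  rw [moZpow hm hl 3 i, gI_three, mul_zero]

lemma moZ4 (i : ι) : ∫ ω, Z i ω ^ (4:ℕ) ∂ℙ = 3 := by
  rw [moZpow hm hl 4 i, gI_four, ← mul_assoc, mul_comm _ (3:ℝ), mul_assoc,
    inv_mul_cancel₀ sqrt2pi_ne, mul_one]

end Moments

section Mul
include hm hi

lemma mom_mul2 [DecidableEq ι] {i j : ι} (hij : i ≠ j) (ei ej : ℕ) :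
    ∫ ω, Z i ω ^ ei * Z j ω ^ ej ∂ℙ
      = (∫ ω, Z i ω ^ ei ∂ℙ) * ∫ ω, Z j ω ^ ej ∂ℙ := by
  have key : ∀ F : ι → ℝ, ∏ t ∈ ({i, j} : Finset ι), F t = F i * F j :=
    fun F => Finset.prod_pair hij
  have h := indep_prod_integral hm hi (fun t => if t = i then ei else ej) {i, j}
  simp only [key] at h
  simpa [if_neg (Ne.symm hij)] using h

lemma mom_mul3 [DecidableEq ι] {i j k : ι} (hij : i ≠ j) (hik : i ≠ k) (hjk : j ≠ k)
    (ei ej ek : ℕ) :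
    ∫ ω, Z i ω ^ ei * Z j ω ^ ej * Z k ω ^ ek ∂ℙ
      = (∫ ω, Z i ω ^ ei ∂ℙ) * (∫ ω, Z j ω ^ ej ∂ℙ) * ∫ ω, Z k ω ^ ek ∂ℙ := by
  have key : ∀ F : ι → ℝ, ∏ t ∈ ({i, j, k} : Finset ι), F t = F i * F j * F k := by
    intro F
    rw [show ({i,j,k} : Finset ι) = insert i (insert j {k}) from rfl,
      Finset.prod_insert (by simp [hij, hik]), Finset.prod_insert (by simp [hjk]),
      Finset.prod_singleton, mul_assoc]
  have h := indep_prod_integral hm hi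
    (fun t => if t = i then ei else if t = j then ej else ek) ({i, j, k} : Finset ι)
  simp only [key] at h
  simpa [if_neg (Ne.symm hij), if_neg (Ne.symm hik), if_neg (Ne.symm hjk)] using h

lemma mom_mul4 [DecidableEq ι] {i j k l : ι} (hij : i ≠ j) (hik : i ≠ k) (hil : i ≠ l)
    (hjk : j ≠ k) (hjl : j ≠ l) (hkl : k ≠ l) :
    ∫ ω, Z i ω * Z j ω * Z k ω * Z l ω ∂ℙ
      = (∫ ω, Z i ω ∂ℙ) * (∫ ω, Z j ω ∂ℙ) * (∫ ω, Z k ω ∂ℙ) * ∫ ω, Z l ω ∂ℙ := by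
  have key : ∀ F : ι → ℝ, ∏ t ∈ ({i, j, k, l} : Finset ι), F t = F i * F j * F k * F l := by
    intro F
    rw [show ({i,j,k,l} : Finset ι) = insert i (insert j (insert k {l})) from rfl,
      Finset.prod_insert (by simp [hij, hik, hil]), Finset.prod_insert (by simp [hjk, hjl]),
      Finset.prod_insert (by simp [hkl]), Finset.prod_singleton]
    ring
  have h := indep_prod_integral hm hi (fun _ => 1) ({i, j, k, l} : Finset ι)
  simp only [key] at h
  simpa using h

end Mul

include hm hi hl

lemma Emom2 [DecidableEq ι] (i j : ι) :
    ∫ ω, Z i ω * Z j ω ∂ℙ = if i = j then (1:ℝ) else 0 := by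
  by_cases h : i = j
  · subst h
    rw [if_pos rfl, show (∫ ω, Z i ω * Z i ω ∂ℙ) = ∫ ω, Z i ω ^ (2:ℕ) ∂ℙ by
      congr 1; funext ω; ring, moZ2 hm hl]
  · rw [if_neg h, show (∫ ω, Z i ω * Z j ω ∂ℙ) = ∫ ω, Z i ω ^ (1:ℕ) * Z j ω ^ (1:ℕ) ∂ℙ by
      congr 1; funext ω; ring, mom_mul2 hm hi h 1 1, moZ1 hm hl, zero_mul]

lemma Emom4 [DecidableEq ι] (a b c d : ι) :
    ∫ ω, Z a ω * Z b ω * Z c ω * Z d ω ∂ℙ =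
      (if a = b then (1:ℝ) else 0) * (if c = d then (1:ℝ) else 0)
      + (if a = c then (1:ℝ) else 0) * (if b = d then (1:ℝ) else 0)
      + (if a = d then (1:ℝ) else 0) * (if b = c then (1:ℝ) else 0) := by
  by_cases hab : a = b
  · subst hab
    by_cases hcd : c = d
    · subst hcd
      by_cases hac : a = c
      · subst hac
        rw [show (∫ ω, Z a ω * Z a ω * Z a ω * Z a ω ∂ℙ) = ∫ ω, Z a ω ^ (4:ℕ) ∂ℙ by
          congr 1; funext ω; ring, moZ4 hm hl]
        norm_num
      · rw [show (∫ ω, Z a ω * Z a ω * Z c ω * Z c ω ∂ℙ)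
            = ∫ ω, Z a ω ^ (2:ℕ) * Z c ω ^ (2:ℕ) ∂ℙ by congr 1; funext ω; ring,
          mom_mul2 hm hi hac 2 2, moZ2 hm hl, moZ2 hm hl]
        simp [hac]
    · by_cases hac : a = c
      · subst hac
        rw [show (∫ ω, Z a ω * Z a ω * Z a ω * Z d ω ∂ℙ)
            = ∫ ω, Z a ω ^ (3:ℕ) * Z d ω ^ (1:ℕ) ∂ℙ by congr 1; funext ω; ring,
          mom_mul2 hm hi hcd 3 1, moZ3 hm hl, zero_mul]
        simp [hcd]
      · by_cases had : a = d
        · subst had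
          rw [show (∫ ω, Z a ω * Z a ω * Z c ω * Z a ω ∂ℙ)
              = ∫ ω, Z a ω ^ (3:ℕ) * Z c ω ^ (1:ℕ) ∂ℙ by congr 1; funext ω; ring,
            mom_mul2 hm hi hac 3 1, moZ3 hm hl, zero_mul]
          simp [hac, hcd, Ne.symm hac]
        · rw [show (∫ ω, Z a ω * Z a ω * Z c ω * Z d ω ∂ℙ)
              = ∫ ω, Z a ω ^ (2:ℕ) * Z c ω ^ (1:ℕ) * Z d ω ^ (1:ℕ) ∂ℙ by
                congr 1; funext ω; ring,
            mom_mul3 hm hi hac had hcd 2 1 1, moZ1 hm hl, mul_zero, zero_mul]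
          simp [hac, had, hcd]
  · by_cases hcd : c = d
    · subst hcd
      by_cases hac : a = c
      · subst hac
        rw [show (∫ ω, Z a ω * Z b ω * Z a ω * Z a ω ∂ℙ)
            = ∫ ω, Z a ω ^ (3:ℕ) * Z b ω ^ (1:ℕ) ∂ℙ by congr 1; funext ω; ring,
          mom_mul2 hm hi hab 3 1, moZ3 hm hl, zero_mul]
        simp [hab, Ne.symm hab]
      · by_cases hbc : b = c
        · subst hbc
          rw [show (∫ ω, Z a ω * Z b ω * Z b ω * Z b ω ∂ℙ)
              = ∫ ω, Z a ω ^ (1:ℕ) * Z b ω ^ (3:ℕ) ∂ℙ by congr 1; funext ω; ring,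
            mom_mul2 hm hi hab 1 3, moZ1 hm hl, zero_mul]
          simp [hab, hac]
        · rw [show (∫ ω, Z a ω * Z b ω * Z c ω * Z c ω ∂ℙ)
              = ∫ ω, Z a ω ^ (1:ℕ) * Z b ω ^ (1:ℕ) * Z c ω ^ (2:ℕ) ∂ℙ by
                congr 1; funext ω; ring,
            mom_mul3 hm hi hab hac hbc 1 1 2, moZ1 hm hl, zero_mul, zero_mul]
          simp [hab, hac, hbc]
    · by_cases hac : a = c
      · subst hac
        by_cases hbd : b = d
        · subst hbd
          rw [show (∫ ω, Z a ω * Z b ω * Z a ω * Z b ω ∂ℙ)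
              = ∫ ω, Z a ω ^ (2:ℕ) * Z b ω ^ (2:ℕ) ∂ℙ by congr 1; funext ω; ring,
            mom_mul2 hm hi hab 2 2, moZ2 hm hl, moZ2 hm hl]
          simp [hab, Ne.symm hab]
        · rw [show (∫ ω, Z a ω * Z b ω * Z a ω * Z d ω ∂ℙ)
              = ∫ ω, Z a ω ^ (2:ℕ) * Z b ω ^ (1:ℕ) * Z d ω ^ (1:ℕ) ∂ℙ by
                congr 1; funext ω; ring,
            mom_mul3 hm hi hab hcd hbd 2 1 1, moZ1 hm hl, mul_zero, zero_mul]
          simp [hab, hbd, hcd]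
      · by_cases had : a = d
        · subst had
          by_cases hbc : b = c
          · subst hbc
            rw [show (∫ ω, Z a ω * Z b ω * Z b ω * Z a ω ∂ℙ)
                = ∫ ω, Z a ω ^ (2:ℕ) * Z b ω ^ (2:ℕ) ∂ℙ by congr 1; funext ω; ring,
              mom_mul2 hm hi hab 2 2, moZ2 hm hl, moZ2 hm hl]
            simp [hab, hac]
          · rw [show (∫ ω, Z a ω * Z b ω * Z c ω * Z a ω ∂ℙ)
                = ∫ ω, Z a ω ^ (2:ℕ) * Z b ω ^ (1:ℕ) * Z c ω ^ (1:ℕ) ∂ℙ by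
                  congr 1; funext ω; ring,
              mom_mul3 hm hi hab hac hbc 2 1 1, moZ1 hm hl, mul_zero, zero_mul]
            simp [hab, hac, hbc, Ne.symm hac]
        · by_cases hbc : b = c
          · subst hbc
            rw [show (∫ ω, Z a ω * Z b ω * Z b ω * Z d ω ∂ℙ)
                = ∫ ω, Z a ω ^ (1:ℕ) * Z b ω ^ (2:ℕ) * Z d ω ^ (1:ℕ) ∂ℙ by
                  congr 1; funext ω; ring,
              mom_mul3 hm hi hab had hcd 1 2 1, moZ1 hm hl, zero_mul]
            simp [hab, hac, had]
          · by_cases hbd : b = d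
            · subst hbd
              rw [show (∫ ω, Z a ω * Z b ω * Z c ω * Z b ω ∂ℙ)
                  = ∫ ω, Z a ω ^ (1:ℕ) * Z b ω ^ (2:ℕ) * Z c ω ^ (1:ℕ) ∂ℙ by
                    congr 1; funext ω; ring,
                mom_mul3 hm hi hab hac (Ne.symm hcd) 1 2 1, moZ1 hm hl, zero_mul]
              simp [hab, hac, had, hbc]
            · have h0 : ∀ i : ι, ∫ ω, Z i ω ∂ℙ = 0 := fun i => by
                simpa using moZ1 hm hl i
              rw [mom_mul4 hm hi hab hac had hbc hbd hcd, h0]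
              simp [hab, hac, had, hbc, hbd, hcd]

end Indep

lemma abs_mul4_le (x y z t : ℝ) : |x * y * z * t| ≤ (x^4 + y^4 + z^4 + t^4) / 4 := by
  have h : |x * y * z * t| = |x| * |y| * |z| * |t| := by
    rw [abs_mul, abs_mul, abs_mul]
  rw [h]
  have hx4 : |x| ^ 4 = x ^ 4 := by rw [← abs_pow]; exact abs_of_nonneg (by positivity)
  have hy4 : |y| ^ 4 = y ^ 4 := by rw [← abs_pow]; exact abs_of_nonneg (by positivity)
  have hz4 : |z| ^ 4 = z ^ 4 := by rw [← abs_pow]; exact abs_of_nonneg (by positivity)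
  have ht4 : |t| ^ 4 = t ^ 4 := by rw [← abs_pow]; exact abs_of_nonneg (by positivity)
  rw [← hx4, ← hy4, ← hz4, ← ht4]
  nlinarith [sq_nonneg (|x| * |y| - |z| * |t|), sq_nonneg (|x|^2 - |y|^2),
    sq_nonneg (|z|^2 - |t|^2), abs_nonneg x, abs_nonneg y, abs_nonneg z, abs_nonneg t,
    mul_nonneg (abs_nonneg x) (abs_nonneg y), mul_nonneg (abs_nonneg z) (abs_nonneg t)]

lemma sum_mul_sum4 {α : Type*} [Fintype α] (f g : α → α → ℝ) :
    (∑ a, ∑ b, f a b) * (∑ c, ∑ d, g c d) = ∑ a, ∑ b, ∑ c, ∑ d, f a b * g c d := by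
  rw [Finset.sum_mul_sum]
  refine Finset.sum_congr rfl fun a _ => ?_
  rw [Finset.sum_comm]
  refine Finset.sum_congr rfl fun b _ => ?_
  rw [Finset.sum_mul_sum]

lemma sum4 {n : ℕ} (B : Matrix (Fin n) (Fin n) ℝ) (hB : ∀ a b, B a b = B b a)
    (J : Prop) [Decidable J] :
    ∑ a, ∑ b, ∑ c, ∑ d, (B a b * B c d) *
      ((if a = b then (1:ℝ) else 0) * (if c = d then (1:ℝ) else 0)
      + (if J ∧ a = c then (1:ℝ) else 0) * (if J ∧ b = d then (1:ℝ) else 0)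
      + (if J ∧ a = d then (1:ℝ) else 0) * (if J ∧ b = c then (1:ℝ) else 0))
    = (∑ a, B a a) ^ 2 + (if J then (1:ℝ) else 0) * (2 * ∑ a, ∑ b, B a b ^ 2) := by
  by_cases hJ : J
  · simp only [hJ, true_and, if_true]
    have e1 : ∑ a, ∑ b, ∑ c, ∑ d : Fin n, (B a b * B c d) *
        ((if a = b then (1:ℝ) else 0) * (if c = d then (1:ℝ) else 0)
        + (if a = c then (1:ℝ) else 0) * (if b = d then (1:ℝ) else 0)
        + (if a = d then (1:ℝ) else 0) * (if b = c then (1:ℝ) else 0))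
        = (∑ a, ∑ b, ∑ c, ∑ d : Fin n, (B a b * B c d) *
            ((if a = b then (1:ℝ) else 0) * (if c = d then (1:ℝ) else 0)))
        + (∑ a, ∑ b, ∑ c, ∑ d : Fin n, (B a b * B c d) *
            ((if a = c then (1:ℝ) else 0) * (if b = d then (1:ℝ) else 0)))
        + (∑ a, ∑ b, ∑ c, ∑ d : Fin n, (B a b * B c d) *
            ((if a = d then (1:ℝ) else 0) * (if b = c then (1:ℝ) else 0))) := by
      simp [mul_add, Finset.sum_add_distrib]
    rw [e1]
    have t1 : ∑ a, ∑ b, ∑ c, ∑ d : Fin n, (B a b * B c d) *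
        ((if a = b then (1:ℝ) else 0) * (if c = d then (1:ℝ) else 0))
        = (∑ a, B a a) ^ 2 := by
      rw [sq, Finset.sum_mul_sum]
      simp [mul_ite, ite_mul, mul_zero, zero_mul, Finset.sum_ite_eq, Finset.sum_ite_eq']
    have t2 : ∑ a, ∑ b, ∑ c, ∑ d : Fin n, (B a b * B c d) *
        ((if a = c then (1:ℝ) else 0) * (if b = d then (1:ℝ) else 0))
        = ∑ a, ∑ b, B a b ^ 2 := by
      simp [mul_ite, ite_mul, mul_zero, zero_mul, Finset.sum_ite_eq, Finset.sum_ite_eq', sq]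
    have t3 : ∑ a, ∑ b, ∑ c, ∑ d : Fin n, (B a b * B c d) *
        ((if a = d then (1:ℝ) else 0) * (if b = c then (1:ℝ) else 0))
        = ∑ a, ∑ b, B a b ^ 2 := by
      have inner : ∀ a b : Fin n, (∑ c, ∑ d : Fin n, (B a b * B c d) *
          ((if a = d then (1:ℝ) else 0) * (if b = c then (1:ℝ) else 0))) = B a b ^ 2 := by
        intro a b
        rw [Finset.sum_eq_single b]
        · rw [Finset.sum_eq_single a]
          · simp [hB b a, sq]
          · intro d _ hd; simp [if_neg (Ne.symm hd)]
          · intro h; exact absurd (Finset.mem_univ a) h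
        · intro c _ hc; simp [if_neg (Ne.symm hc)]
        · intro h; exact absurd (Finset.mem_univ b) h
      exact Finset.sum_congr rfl fun a _ => Finset.sum_congr rfl fun b _ => inner a b
    rw [t1, t2, t3]
    ring
  · simp only [hJ, false_and, if_false, if_neg hJ]
    have t1 : ∑ a, ∑ b, ∑ c, ∑ d : Fin n, (B a b * B c d) *
        ((if a = b then (1:ℝ) else 0) * (if c = d then (1:ℝ) else 0) + 0 * 0 + 0 * 0)
        = (∑ a, B a a) ^ 2 := by
      rw [sq, Finset.sum_mul_sum]
      simp [mul_ite, ite_mul, mul_zero, zero_mul, Finset.sum_ite_eq, Finset.sum_ite_eq']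
    rw [t1]
    ring

end SVTEAux

open SVTEAux

/-- For an SPSD matrix `A`, an integer `p ≥ 1`, and independent random
vectors `w_1, …, w_M` whose `n·M` entries are i.i.d. standard normal, the estimator
`X_M^p = (1/M) ∑_j w_jᵀ A^p w_j` satisfies `E[X_M^p] = tr(A^p) = ‖A‖_p^p` and
`Var(X_M^p) = 2 ‖A^p‖_F² / M`. -/
theorem expectation_and_variance_schatten_trace_estimator
    {Ω : Type*} [MeasureSpace Ω] [IsProbabilityMeasure (ℙ : Measure Ω)]
    {n : ℕ} (hn : 1 ≤ n)
    (A : Matrix (Fin n) (Fin n) ℝ) (hA : A.PosSemidef)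
    (p : ℕ) (hp : 1 ≤ p) (M : ℕ) (hM : 1 ≤ M)
    (w : Fin M → Ω → Fin n → ℝ)
    (hmeas : ∀ ji : Fin M × Fin n, Measurable fun ω => w ji.1 ω ji.2)
    (hindep : iIndepFun
      (fun ji : Fin M × Fin n => fun ω => w ji.1 ω ji.2) ℙ)
    (hlaw : ∀ ji : Fin M × Fin n,
      Measure.map (fun ω => w ji.1 ω ji.2) ℙ = gaussianReal 0 1) :
    (∫ ω, (1 / (M : ℝ)) * ∑ j, w j ω ⬝ᵥ (A ^ p).mulVec (w j ω) ∂ℙ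
        = Matrix.trace (A ^ p))
    ∧ Matrix.trace (A ^ p) = ((Matrix.trace (A ^ p)) ^ (1 / (p : ℝ))) ^ (p : ℝ)
    ∧ variance (fun ω => (1 / (M : ℝ)) * ∑ j, w j ω ⬝ᵥ (A ^ p).mulVec (w j ω)) ℙ
        = 2 * (∑ i, ∑ j, ((A ^ p) i j) ^ 2) / M := by
  classical
  set B : Matrix (Fin n) (Fin n) ℝ := A ^ p with hB
  set Z : Fin M × Fin n → Ω → ℝ := fun ji ω => w ji.1 ω ji.2 with hZ
  have hm : ∀ i, Measurable (Z i) := hmeas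
  have hi : iIndepFun Z ℙ := hindep
  have hl : ∀ i, Measure.map (Z i) ℙ = gaussianReal 0 1 := hlaw
  have hBsd : B.PosSemidef := hA.pow p
  have hsym : ∀ a b, B a b = B b a := by
    intro a b
    have := hBsd.isHermitian
    rw [Matrix.IsHermitian] at this
    conv_lhs => rw [← this]
    simp [Matrix.conjTranspose_apply]
  have hM0 : (M : ℝ) ≠ 0 := Nat.cast_ne_zero.mpr (by omega)
  -- pointwise expansion of the quadratic form
  have hQ : ∀ (j : Fin M) (ω : Ω), w j ω ⬝ᵥ B.mulVec (w j ω)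
      = ∑ a, ∑ b, B a b * (Z (j, a) ω * Z (j, b) ω) := by
    intro j ω
    simp only [dotProduct, Matrix.mulVec, Finset.mul_sum]
    exact Finset.sum_congr rfl fun a _ => Finset.sum_congr rfl fun b _ => by
      simp only [hZ]; ring
  -- integrability of double products
  have I2 : ∀ i j : Fin M × Fin n, Integrable (fun ω => Z i ω * Z j ω) ℙ := by
    intro i j
    by_cases h : i = j
    · subst h
      exact (intZpow hm hl 2 i).congr (Filter.Eventually.of_forall fun ω => by ring)
    · exact ((hi.indepFun h).integrable_mul
        ((intZpow hm hl 1 i).congr (Filter.Eventually.of_forall fun ω => by ring))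
        ((intZpow hm hl 1 j).congr (Filter.Eventually.of_forall fun ω => by ring)))
  -- integrability of quadruple products
  have I4 : ∀ a b c d : Fin M × Fin n,
      Integrable (fun ω => Z a ω * Z b ω * Z c ω * Z d ω) ℙ := by
    intro a b c d
    have hg : Integrable (fun ω =>
        (Z a ω ^ (4:ℕ) + Z b ω ^ (4:ℕ) + Z c ω ^ (4:ℕ) + Z d ω ^ (4:ℕ)) / 4) ℙ :=
      ((((intZpow hm hl 4 a).add (intZpow hm hl 4 b)).add
        (intZpow hm hl 4 c)).add (intZpow hm hl 4 d)).div_const 4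
    refine Integrable.mono' hg ?_ ?_
    · exact ((((hm a).mul (hm b)).mul (hm c)).mul (hm d)).aestronglyMeasurable
    · filter_upwards with ω
      rw [Real.norm_eq_abs]
      exact abs_mul4_le _ _ _ _
  -- integrability of Q j
  have IQ : ∀ j : Fin M, Integrable (fun ω => w j ω ⬝ᵥ B.mulVec (w j ω)) ℙ := by
    intro j
    have : Integrable (fun ω => ∑ a, ∑ b, B a b * (Z (j, a) ω * Z (j, b) ω)) ℙ :=
      integrable_finset_sum _ fun a _ => integrable_finset_sum _ fun b _ =>
        (I2 (j, a) (j, b)).const_mul _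
    exact this.congr (Filter.Eventually.of_forall fun ω => (hQ j ω).symm)
  -- expectation of Q j
  have hEQ : ∀ j : Fin M, ∫ ω, w j ω ⬝ᵥ B.mulVec (w j ω) ∂ℙ = Matrix.trace B := by
    intro j
    rw [show (∫ ω, w j ω ⬝ᵥ B.mulVec (w j ω) ∂ℙ)
        = ∫ ω, ∑ a, ∑ b, B a b * (Z (j, a) ω * Z (j, b) ω) ∂ℙ by
      congr 1; funext ω; exact hQ j ω]
    rw [integral_finset_sum _ fun a _ => integrable_finset_sum _ fun b _ =>
      (I2 (j, a) (j, b)).const_mul (B a b)]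
    have step : ∀ a : Fin n, (∫ ω, ∑ b, B a b * (Z (j, a) ω * Z (j, b) ω) ∂ℙ)
        = ∑ b, B a b * (if a = b then (1:ℝ) else 0) := by
      intro a
      rw [integral_finset_sum _ fun b _ => (I2 (j, a) (j, b)).const_mul (B a b)]
      refine Finset.sum_congr rfl fun b _ => ?_
      rw [MeasureTheory.integral_const_mul, Emom2 hm hi hl (j, a) (j, b)]
      congr 1
      simp [Prod.ext_iff]
    rw [Finset.sum_congr rfl fun a _ => step a]
    simp only [mul_ite, mul_one, mul_zero, Finset.sum_ite_eq, Finset.mem_univ, if_true]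
    rw [Matrix.trace]
    rfl
  -- Part 1: expectation
  have part1 : ∫ ω, (1 / (M : ℝ)) * ∑ j, w j ω ⬝ᵥ B.mulVec (w j ω) ∂ℙ
      = Matrix.trace B := by
    rw [MeasureTheory.integral_const_mul, integral_finset_sum _ fun j _ => IQ j]
    rw [Finset.sum_congr rfl fun j _ => hEQ j]
    simp [Finset.card_univ]
    field_simp
  -- Part 2: trace identity
  have htr0 : 0 ≤ Matrix.trace B := by
    rw [Matrix.trace]
    refine Finset.sum_nonneg fun a _ => ?_
    exact hBsd.diag_nonneg
  have part2 : Matrix.trace B = ((Matrix.trace B) ^ (1 / (p : ℝ))) ^ (p : ℝ) := by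
    rw [← Real.rpow_mul htr0, one_div, inv_mul_cancel₀ (by exact_mod_cast by omega : (p:ℝ) ≠ 0),
      Real.rpow_one]
  -- expectations of products of Q's
  have hQQ : ∀ (j k : Fin M) (ω : Ω),
      (w j ω ⬝ᵥ B.mulVec (w j ω)) * (w k ω ⬝ᵥ B.mulVec (w k ω))
      = ∑ a, ∑ b, ∑ c, ∑ d, (B a b * B c d) *
          (Z (j, a) ω * Z (j, b) ω * Z (k, c) ω * Z (k, d) ω) := by
    intro j k ω
    rw [hQ j ω, hQ k ω, sum_mul_sum4]
    exact Finset.sum_congr rfl fun a _ => Finset.sum_congr rfl fun b _ =>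
      Finset.sum_congr rfl fun c _ => Finset.sum_congr rfl fun d _ => by ring
  have IQQ : ∀ j k : Fin M,
      Integrable (fun ω => (w j ω ⬝ᵥ B.mulVec (w j ω)) * (w k ω ⬝ᵥ B.mulVec (w k ω))) ℙ := by
    intro j k
    have : Integrable (fun ω => ∑ a, ∑ b, ∑ c, ∑ d, (B a b * B c d) *
        (Z (j, a) ω * Z (j, b) ω * Z (k, c) ω * Z (k, d) ω)) ℙ :=
      integrable_finset_sum _ fun a _ => integrable_finset_sum _ fun b _ =>
        integrable_finset_sum _ fun c _ => integrable_finset_sum _ fun d _ =>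
          (I4 _ _ _ _).const_mul _
    exact this.congr (Filter.Eventually.of_forall fun ω => (hQQ j k ω).symm)
  have hEQQ : ∀ j k : Fin M,
      ∫ ω, (w j ω ⬝ᵥ B.mulVec (w j ω)) * (w k ω ⬝ᵥ B.mulVec (w k ω)) ∂ℙ
      = (Matrix.trace B) ^ 2
        + (if j = k then (1:ℝ) else 0) * (2 * ∑ a, ∑ b, B a b ^ 2) := by
    intro j k
    rw [show (∫ ω, (w j ω ⬝ᵥ B.mulVec (w j ω)) * (w k ω ⬝ᵥ B.mulVec (w k ω)) ∂ℙ)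
        = ∫ ω, ∑ a, ∑ b, ∑ c, ∑ d, (B a b * B c d) *
            (Z (j, a) ω * Z (j, b) ω * Z (k, c) ω * Z (k, d) ω) ∂ℙ by
      congr 1; funext ω; exact hQQ j k ω]
    rw [integral_finset_sum _ fun a _ => integrable_finset_sum _ fun b _ =>
      integrable_finset_sum _ fun c _ => integrable_finset_sum _ fun d _ =>
        (I4 _ _ _ _).const_mul _]
    have step : ∀ a b c d : Fin n,
        (∫ ω, (B a b * B c d) *
          (Z (j, a) ω * Z (j, b) ω * Z (k, c) ω * Z (k, d) ω) ∂ℙ)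
        = (B a b * B c d) *
          ((if a = b then (1:ℝ) else 0) * (if c = d then (1:ℝ) else 0)
          + (if j = k ∧ a = c then (1:ℝ) else 0) * (if j = k ∧ b = d then (1:ℝ) else 0)
          + (if j = k ∧ a = d then (1:ℝ) else 0) * (if j = k ∧ b = c then (1:ℝ) else 0)) := by
      intro a b c d
      rw [MeasureTheory.integral_const_mul, Emom4 hm hi hl (j, a) (j, b) (k, c) (k, d)]
      simp only [Prod.mk.injEq, eq_self_iff_true, true_and]
    rw [Finset.sum_congr rfl fun a _ => integral_finset_sum _ fun b _ =>
      integrable_finset_sum _ fun c _ => integrable_finset_sum _ fun d _ =>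
        (I4 _ _ _ _).const_mul _]
    rw [Finset.sum_congr rfl fun a _ => Finset.sum_congr rfl fun b _ =>
      integral_finset_sum _ fun c _ => integrable_finset_sum _ fun d _ =>
        (I4 _ _ _ _).const_mul _]
    rw [Finset.sum_congr rfl fun a _ => Finset.sum_congr rfl fun b _ =>
      Finset.sum_congr rfl fun c _ => integral_finset_sum _ fun d _ =>
        (I4 _ _ _ _).const_mul _]
    rw [Finset.sum_congr rfl fun a _ => Finset.sum_congr rfl fun b _ =>
      Finset.sum_congr rfl fun c _ => Finset.sum_congr rfl fun d _ => step a b c d]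
    rw [sum4 B hsym (j = k),
      show (∑ a, B a a) = Matrix.trace B from by rw [Matrix.trace]; rfl]
  -- Part 3: variance
  set X : Ω → ℝ := fun ω => (1 / (M : ℝ)) * ∑ j, w j ω ⬝ᵥ B.mulVec (w j ω) with hX
  have hXm : Measurable X := by
    apply Measurable.const_mul
    apply Finset.measurable_sum
    intro j _
    have : (fun ω => w j ω ⬝ᵥ B.mulVec (w j ω))
        = fun ω => ∑ a, ∑ b, B a b * (Z (j, a) ω * Z (j, b) ω) := by
      funext ω; exact hQ j ω
    rw [this]
    exact Finset.measurable_sum _ fun a _ => Finset.measurable_sum _ fun b _ =>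
      (measurable_const.mul ((hm (j, a)).mul (hm (j, b))))
  have hXsq : ∀ ω, X ω ^ 2 = (1 / (M : ℝ))^2 *
      ∑ j, ∑ k, (w j ω ⬝ᵥ B.mulVec (w j ω)) * (w k ω ⬝ᵥ B.mulVec (w k ω)) := by
    intro ω
    rw [hX]
    simp only [mul_pow]
    rw [sq (∑ j, w j ω ⬝ᵥ B.mulVec (w j ω)), Finset.sum_mul_sum]
  have hX2int : Integrable (fun ω => X ω ^ 2) ℙ := by
    have : Integrable (fun ω => (1 / (M : ℝ))^2 *
        ∑ j, ∑ k, (w j ω ⬝ᵥ B.mulVec (w j ω)) * (w k ω ⬝ᵥ B.mulVec (w k ω))) ℙ :=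
      (integrable_finset_sum _ fun j _ => integrable_finset_sum _ fun k _ =>
        IQQ j k).const_mul _
    exact this.congr (Filter.Eventually.of_forall fun ω => (hXsq ω).symm)
  have hmemp : MemLp X 2 ℙ :=
    (memLp_two_iff_integrable_sq hXm.aestronglyMeasurable).mpr hX2int
  have hvar := variance_eq_sub hmemp
  have hEX2 : ∫ ω, X ω ^ 2 ∂ℙ = (1 / (M : ℝ))^2 *
      ((M : ℝ)^2 * (Matrix.trace B)^2 + (M:ℝ) * (2 * ∑ a, ∑ b, B a b ^ 2)) := by
    rw [show (∫ ω, X ω ^ 2 ∂ℙ) = ∫ ω, (1 / (M : ℝ))^2 *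
        ∑ j, ∑ k, (w j ω ⬝ᵥ B.mulVec (w j ω)) * (w k ω ⬝ᵥ B.mulVec (w k ω)) ∂ℙ by
      congr 1; funext ω; exact hXsq ω]
    rw [MeasureTheory.integral_const_mul,
      integral_finset_sum _ fun j _ => integrable_finset_sum _ fun k _ => IQQ j k]
    congr 1
    rw [Finset.sum_congr rfl fun j _ => integral_finset_sum _ fun k _ => IQQ j k]
    rw [Finset.sum_congr rfl fun j _ => Finset.sum_congr rfl fun k _ => hEQQ j k]
    have inner : ∀ j : Fin M, ∑ k, ((Matrix.trace B)^2
        + (if j = k then (1:ℝ) else 0) * (2 * ∑ a, ∑ b, B a b ^ 2))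
        = (M:ℝ) * (Matrix.trace B)^2 + (2 * ∑ a, ∑ b, B a b ^ 2) := by
      intro j
      rw [Finset.sum_add_distrib]
      simp [ite_mul, Finset.sum_ite_eq, Finset.card_univ]
    rw [Finset.sum_congr rfl fun j _ => inner j]
    simp [Finset.sum_add_distrib, Finset.card_univ]
    ring
  have part3 : variance X ℙ = 2 * (∑ a, ∑ b, B a b ^ 2) / M := by
    rw [hvar]
    have e2 : (ℙ[X ^ 2] : ℝ) = ∫ ω, X ω ^ 2 ∂ℙ := by
      congr 1
    have e1 : (ℙ[X] : ℝ) = Matrix.trace B := part1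
    rw [e2, e1, hEX2]
    field_simp
    ring
  exact ⟨part1, part2, part3⟩
end

section
/- Let A be a real symmetric positive semidefinite n×n matrix and let p ≥ 1 be an integer. On a probability space, let w_1, …, w_M be independent random vectors in ℝ^n whose n·M scalar entries are i.i.d. standard normal, and let X_M = ((1/M) Σ_{j=1}^M w_jᵀ A^p w_j)^{1/p}. Then for all M ≥ 1, E[X_M] ≤ ‖A‖_p. -/
open MeasureTheory ProbabilityTheory Matrix Real Set

noncomputable def stdGaussPDF : ℝ → NNReal := fun x => (gaussianPDFReal 0 1 x).toNNReal

lemma stdGaussPDF_meas : Measurable stdGaussPDF :=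
  (measurable_gaussianPDFReal 0 1).real_toNNReal

lemma stdGaussPDF_coe (x : ℝ) :
    (stdGaussPDF x : ℝ) = (√(2 * π))⁻¹ * rexp (-(2⁻¹ : ℝ) * x ^ 2) := by
  rw [stdGaussPDF, Real.coe_toNNReal _ (gaussianPDFReal_nonneg 0 1 x)]
  simp only [gaussianPDFReal, NNReal.coe_one, mul_one, sub_zero]
  ring_nf

lemma gaussianReal_eq_withDensity :
    gaussianReal 0 1 = MeasureTheory.volume.withDensity (fun x => (stdGaussPDF x : ENNReal)) := by
  rw [gaussianReal_of_var_ne_zero 0 one_ne_zero]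
  rfl

lemma integrable_stdGaussPDF_mul_id :
    Integrable (fun x : ℝ => (stdGaussPDF x : ℝ) * x) := by
  have h := (integrable_mul_exp_neg_mul_sq (b := 2⁻¹) (by norm_num)).const_mul (√(2 * π))⁻¹
  have e : ∀ x : ℝ, (stdGaussPDF x : ℝ) * x = (√(2 * π))⁻¹ * (x * rexp (-2⁻¹ * x ^ 2)) :=
    fun x => by rw [stdGaussPDF_coe]; ring
  simp only [e]
  exact h

lemma integrable_stdGaussPDF_mul_sq :
    Integrable (fun x : ℝ => (stdGaussPDF x : ℝ) * x ^ 2) := by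
  have h := (integrable_rpow_mul_exp_neg_mul_sq (b := 2⁻¹) (by norm_num)
      (s := 2) (by norm_num)).const_mul (√(2 * π))⁻¹
  have h2' : ∀ x : ℝ, x ^ (2 : ℝ) = x ^ (2 : ℕ) := fun x => by
    rw [show (2 : ℝ) = ((2 : ℕ) : ℝ) by norm_num]; exact Real.rpow_natCast x 2
  simp_rw [h2'] at h
  have e : ∀ x : ℝ, (stdGaussPDF x : ℝ) * x ^ 2
      = (√(2 * π))⁻¹ * (x ^ 2 * rexp (-2⁻¹ * x ^ 2)) :=
    fun x => by rw [stdGaussPDF_coe]; ring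
  simp only [e]
  exact h

lemma integral_stdGaussPDF_mul_id :
    ∫ x : ℝ, (stdGaussPDF x : ℝ) * x = 0 := by
  have h := integral_neg_eq_self (fun x : ℝ => (stdGaussPDF x : ℝ) * x) MeasureTheory.volume
  have hodd : ∀ x : ℝ, (stdGaussPDF (-x) : ℝ) * (-x) = -((stdGaussPDF x : ℝ) * x) := by
    intro x
    rw [stdGaussPDF_coe, stdGaussPDF_coe, neg_sq]
    ring
  simp_rw [hodd, integral_neg] at h
  linarith

lemma integral_sq_exp_Ioi :
    ∫ x in Ioi (0:ℝ), x ^ (2:ℕ) * rexp (-(2⁻¹:ℝ) * x ^ (2:ℕ)) = √2 * (√π / 2) := by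
  have key := integral_rpow_mul_exp_neg_mul_rpow (p := 2) (q := 2) (b := 2⁻¹)
    (by norm_num) (by norm_num) (by norm_num)
  have h2' : ∀ x : ℝ, x ^ (2 : ℝ) = x ^ (2 : ℕ) := fun x => by
    rw [show (2 : ℝ) = ((2 : ℕ) : ℝ) by norm_num]; exact Real.rpow_natCast x 2
  simp_rw [h2'] at key
  rw [key]
  have hG : Real.Gamma (((2:ℝ) + 1) / (2:ℝ)) = √π / 2 := by
    rw [show (((2:ℝ)) + 1) / (2:ℝ) = 1/2 + 1 by norm_num,
      Real.Gamma_add_one (by norm_num), Real.Gamma_one_half_eq]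
    ring
  rw [hG]
  have hpow : (2⁻¹:ℝ) ^ (-((2:ℝ) + 1) / (2:ℝ)) = 2 * √2 := by
    rw [show (-((2:ℝ) + 1) / (2:ℝ)) = -(3/2 : ℝ) by norm_num,
      Real.rpow_neg (by norm_num), Real.inv_rpow (by norm_num), inv_inv,
      show (3/2 : ℝ) = 1 + 1/2 by norm_num, Real.rpow_add (by norm_num),
      Real.rpow_one, ← Real.sqrt_eq_rpow]
  rw [hpow]
  ring

lemma integral_stdGaussPDF_mul_sq :
    ∫ x : ℝ, (stdGaussPDF x : ℝ) * x ^ 2 = 1 := by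
  have heq : (fun x : ℝ => (stdGaussPDF x : ℝ) * x ^ 2)
      = fun x : ℝ => (√(2 * π))⁻¹ * (|x| ^ (2:ℕ) * rexp (-(2⁻¹:ℝ) * |x| ^ (2:ℕ))) := by
    funext x
    rw [stdGaussPDF_coe, sq_abs]
    ring
  rw [heq]
  rw [MeasureTheory.integral_const_mul]
  rw [integral_comp_abs (f := fun t : ℝ => t ^ (2:ℕ) * rexp (-(2⁻¹:ℝ) * t ^ (2:ℕ)))]
  rw [integral_sq_exp_Ioi]
  rw [Real.sqrt_mul (by norm_num : (0:ℝ) ≤ 2)]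
  have h2 : (0:ℝ) < √2 := Real.sqrt_pos.mpr (by norm_num)
  have hπ : (0:ℝ) < √π := Real.sqrt_pos.mpr Real.pi_pos
  field_simp

lemma integrable_id_gaussianReal : Integrable (fun x : ℝ => x) (gaussianReal 0 1) := by
  rw [gaussianReal_eq_withDensity,
    integrable_withDensity_iff_integrable_smul stdGaussPDF_meas]
  simpa [NNReal.smul_def] using integrable_stdGaussPDF_mul_id

lemma integrable_sq_gaussianReal : Integrable (fun x : ℝ => x ^ 2) (gaussianReal 0 1) := by
  rw [gaussianReal_eq_withDensity,
    integrable_withDensity_iff_integrable_smul stdGaussPDF_meas]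
  simpa [NNReal.smul_def] using integrable_stdGaussPDF_mul_sq

lemma integral_id_gaussianReal : ∫ x : ℝ, x ∂(gaussianReal 0 1) = 0 := by
  rw [gaussianReal_eq_withDensity,
    integral_withDensity_eq_integral_smul stdGaussPDF_meas]
  simpa [NNReal.smul_def] using integral_stdGaussPDF_mul_id

lemma integral_sq_gaussianReal : ∫ x : ℝ, x ^ 2 ∂(gaussianReal 0 1) = 1 := by
  rw [gaussianReal_eq_withDensity,
    integral_withDensity_eq_integral_smul stdGaussPDF_meas]
  simpa [NNReal.smul_def] using integral_stdGaussPDF_mul_sq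

/-- For an SPSD matrix `A`, an integer `p ≥ 1`, and independent random
vectors `w_1, …, w_M` with i.i.d. standard normal entries, the Monte Carlo estimator
`X_M = ((1/M) ∑_j w_jᵀ A^p w_j)^{1/p}` satisfies `E[X_M] ≤ ‖A‖_p = (tr(A^p))^{1/p}`. -/
theorem expectation_schatten_estimator_le
    {Ω : Type*} [MeasureSpace Ω] [IsProbabilityMeasure (ℙ : Measure Ω)]
    {n : ℕ} (hn : 1 ≤ n)
    (A : Matrix (Fin n) (Fin n) ℝ) (hA : A.PosSemidef)
    (p : ℕ) (hp : 1 ≤ p) (M : ℕ) (hM : 1 ≤ M)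
    (w : Fin M → Ω → Fin n → ℝ)
    (hmeas : ∀ ji : Fin M × Fin n, Measurable fun ω => w ji.1 ω ji.2)
    (hindep : iIndepFun
      (fun ji : Fin M × Fin n => fun ω => w ji.1 ω ji.2) ℙ)
    (hlaw : ∀ ji : Fin M × Fin n,
      Measure.map (fun ω => w ji.1 ω ji.2) ℙ = gaussianReal 0 1) :
    ∫ ω, ((1 / (M : ℝ)) * ∑ j, w j ω ⬝ᵥ (A ^ p).mulVec (w j ω)) ^ (1 / (p : ℝ)) ∂ℙ
      ≤ (Matrix.trace (A ^ p)) ^ (1 / (p : ℝ)) := by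
  set B := A ^ p with hBdef
  have hB : B.PosSemidef := hA.pow p
  have hWmeas : ∀ (j : Fin M) (i : Fin n), Measurable fun ω => w j ω i :=
    fun j i => hmeas (j, i)
  -- coordinate integrability and moments
  have hInt1 : ∀ (j : Fin M) (i : Fin n), Integrable (fun ω => w j ω i) ℙ := by
    intro j i
    have h := integrable_id_gaussianReal
    rw [← hlaw (j, i)] at h
    exact (integrable_map_measure measurable_id.aestronglyMeasurable
      ((hWmeas j i).aemeasurable)).mp h
  have hInt2 : ∀ (j : Fin M) (i : Fin n), Integrable (fun ω => (w j ω i) ^ 2) ℙ := by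
    intro j i
    have h := integrable_sq_gaussianReal
    rw [← hlaw (j, i)] at h
    exact (integrable_map_measure ((measurable_id.pow_const 2).aestronglyMeasurable)
      ((hWmeas j i).aemeasurable)).mp h
  have hMom1 : ∀ (j : Fin M) (i : Fin n), ∫ ω, w j ω i ∂ℙ = 0 := by
    intro j i
    have h := MeasureTheory.integral_map (φ := fun ω => w j ω i) (f := fun x : ℝ => x)
      ((hWmeas j i).aemeasurable) (by rw [hlaw (j, i)]; exact measurable_id.aestronglyMeasurable)
    rw [hlaw (j, i), _root_.integral_id_gaussianReal] at h
    exact h.symm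
  have hMom2 : ∀ (j : Fin M) (i : Fin n), ∫ ω, (w j ω i) ^ 2 ∂ℙ = 1 := by
    intro j i
    have h := MeasureTheory.integral_map (φ := fun ω => w j ω i) (f := fun x : ℝ => x ^ 2)
      ((hWmeas j i).aemeasurable)
      (by rw [hlaw (j, i)]; exact (measurable_id.pow_const 2).aestronglyMeasurable)
    rw [hlaw (j, i), integral_sq_gaussianReal] at h
    exact h.symm
  -- product integrability
  have hIntProd : ∀ (j : Fin M) (i k : Fin n), Integrable (fun ω => w j ω i * w j ω k) ℙ := by
    intro j i k
    by_cases hik : i = k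
    · subst hik
      simpa [pow_two] using hInt2 j i
    · have hind : IndepFun (fun ω => w j ω i) (fun ω => w j ω k) ℙ :=
        hindep.indepFun (i := (j, i)) (j := (j, k)) (by simp [hik])
      exact hind.integrable_mul (hInt1 j i) (hInt1 j k)
  -- product integral for distinct coordinates
  have hProdInt : ∀ (j : Fin M) (i k : Fin n), i ≠ k →
      ∫ ω, w j ω i * w j ω k ∂ℙ = 0 := by
    intro j i k hik
    have hind : IndepFun (fun ω => w j ω i) (fun ω => w j ω k) ℙ :=
      hindep.indepFun (i := (j, i)) (j := (j, k)) (by simp [hik])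
    have h := hind.integral_mul_eq_mul_integral (hInt1 j i).aestronglyMeasurable (hInt1 j k).aestronglyMeasurable
    rw [show (fun ω => w j ω i * w j ω k) = ((fun ω => w j ω i) * fun ω => w j ω k) from rfl,
      h, hMom1, zero_mul]
  -- expand the quadratic form
  have hq_eq : ∀ (j : Fin M) (ω : Ω), w j ω ⬝ᵥ B.mulVec (w j ω)
      = ∑ i, ∑ k, B i k * (w j ω i * w j ω k) := by
    intro j ω
    simp only [dotProduct, Matrix.mulVec, Finset.mul_sum]
    exact Finset.sum_congr rfl fun i _ => Finset.sum_congr rfl fun k _ => by ring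
  have hTermInt : ∀ (j : Fin M) (i k : Fin n),
      Integrable (fun ω => B i k * (w j ω i * w j ω k)) ℙ :=
    fun j i k => (hIntProd j i k).const_mul _
  have hqInt : ∀ j : Fin M, Integrable (fun ω => w j ω ⬝ᵥ B.mulVec (w j ω)) ℙ := by
    intro j
    have h : Integrable (fun ω => ∑ i, ∑ k, B i k * (w j ω i * w j ω k)) ℙ :=
      integrable_finset_sum _ fun i _ => integrable_finset_sum _ fun k _ => hTermInt j i k
    exact h.congr (Filter.Eventually.of_forall fun ω => (hq_eq j ω).symm)
  have hqVal : ∀ j : Fin M, ∫ ω, w j ω ⬝ᵥ B.mulVec (w j ω) ∂ℙ = B.trace := by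
    intro j
    simp_rw [hq_eq j]
    rw [integral_finset_sum _ (fun i _ => integrable_finset_sum _ fun k _ => hTermInt j i k)]
    have hrow : ∀ i : Fin n, ∫ ω, ∑ k, B i k * (w j ω i * w j ω k) ∂ℙ = B i i := by
      intro i
      rw [integral_finset_sum _ fun k _ => hTermInt j i k]
      have hterm : ∀ k : Fin n, ∫ ω, B i k * (w j ω i * w j ω k) ∂ℙ
          = if k = i then B i i else 0 := by
        intro k
        rw [MeasureTheory.integral_const_mul]
        by_cases hk : k = i
        · subst hk
          have h1 : ∫ ω, w j ω k * w j ω k ∂ℙ = 1 := by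
            simpa [pow_two] using hMom2 j k
          simp [h1]
        · rw [hProdInt j i k (fun h => hk h.symm), mul_zero, if_neg hk]
      rw [Finset.sum_congr rfl fun k _ => hterm k]
      simp
    rw [Finset.sum_congr rfl fun i _ => hrow i]
    simp [Matrix.trace, Matrix.diag]
  -- the estimator before the power
  set Y : Ω → ℝ := fun ω => (1 / (M : ℝ)) * ∑ j, w j ω ⬝ᵥ B.mulVec (w j ω) with hYdef
  have hYint : Integrable Y ℙ :=
    (integrable_finset_sum _ fun j _ => hqInt j).const_mul _
  have hYval : ∫ ω, Y ω ∂ℙ = B.trace := by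
    simp only [hYdef]
    rw [MeasureTheory.integral_const_mul, integral_finset_sum _ fun j _ => hqInt j]
    simp only [hqVal, Finset.sum_const, Finset.card_univ, Fintype.card_fin, nsmul_eq_mul]
    have hM0 : (M : ℝ) ≠ 0 := Nat.cast_ne_zero.mpr (by omega)
    field_simp
  have hYnn : ∀ ω, 0 ≤ Y ω := by
    intro ω
    apply mul_nonneg (by positivity)
    exact Finset.sum_nonneg fun j _ => by simpa using hB.dotProduct_mulVec_nonneg (w j ω)
  have hYmeas : Measurable Y := by
    apply Measurable.const_mul
    apply Finset.measurable_sum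
    intro j _
    simp only [dotProduct, Matrix.mulVec]
    apply Finset.measurable_sum
    intro i _
    exact (hWmeas j i).mul (Finset.measurable_sum _ fun k _ => ((hWmeas j k).const_mul _))
  -- exponent facts
  have hppos : (0:ℝ) < (p : ℝ) := by exact_mod_cast hp
  have hc0 : (0:ℝ) < 1 / (p : ℝ) := by positivity
  have hc1 : 1 / (p : ℝ) ≤ 1 := by
    rw [div_le_one hppos]
    exact_mod_cast hp
  -- integrability of the rpow
  have hgmeas : Measurable fun ω => Y ω ^ (1 / (p : ℝ)) := by fun_prop
  have hgi : Integrable (fun ω => Y ω ^ (1 / (p : ℝ))) ℙ := by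
    refine Integrable.mono' ((integrable_const (1:ℝ)).add hYint)
      hgmeas.aestronglyMeasurable (Filter.Eventually.of_forall fun ω => ?_)
    rw [Real.norm_eq_abs, abs_of_nonneg (Real.rpow_nonneg (hYnn ω) _)]
    rcases le_total (Y ω) 1 with h | h
    · have := Real.rpow_le_one (hYnn ω) h hc0.le
      simp only [Pi.add_apply]
      linarith [hYnn ω]
    · have h2 : Y ω ^ (1 / (p : ℝ)) ≤ Y ω ^ (1:ℝ) :=
        Real.rpow_le_rpow_of_exponent_le h hc1
      rw [Real.rpow_one] at h2
      simp only [Pi.add_apply]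
      linarith
  -- Jensen's inequality for the concave function x ↦ x^(1/p)
  have hcont : ContinuousOn (fun x : ℝ => x ^ (1 / (p : ℝ))) (Ici 0) := fun x _ =>
    (Real.continuousAt_rpow_const x _ (Or.inr hc0.le)).continuousWithinAt
  have jensen := (Real.concaveOn_rpow hc0.le hc1).le_map_integral hcont isClosed_Ici
    (Filter.Eventually.of_forall fun ω => hYnn ω) hYint hgi
  rw [hYval] at jensen
  exact jensen
end

section
/- Let Y be a non-negative real random variable with E[Y] > 0 and finite variance, and let α ∈ [0,1]. Then Var(Y^α) ≤ E[ |Y^α − (E[Y])^α|² ] ≤ Var(Y) / (E[Y])^{2−2α}. -/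
open MeasureTheory ProbabilityTheory

lemma aux1 {α t : ℝ} (hα0 : 0 ≤ α) (hα1 : α ≤ 1) (ht : 0 ≤ t) :
    |t ^ α - 1| ≤ |t - 1| := by
  rcases le_total 1 t with h | h
  · have h1 : t ^ α ≤ t := by
      simpa using Real.rpow_le_rpow_of_exponent_le h hα1
    have h2 : 1 ≤ t ^ α := Real.one_le_rpow h hα0
    rw [abs_of_nonneg (by linarith), abs_of_nonneg (by linarith)]
    linarith
  · have h1 : t ^ α ≤ 1 := Real.rpow_le_one ht h hα0
    have h2 : t ≤ t ^ α := by
      rcases eq_or_lt_of_le ht with h0 | h0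
      · rw [← h0]; exact Real.rpow_nonneg le_rfl α
      · simpa using Real.rpow_le_rpow_of_exponent_ge h0 h hα1
    rw [abs_of_nonpos (by linarith), abs_of_nonpos (by linarith)]
    linarith

lemma aux2 {α x m : ℝ} (hα0 : 0 ≤ α) (hα1 : α ≤ 1) (hx : 0 ≤ x) (hm : 0 < m) :
    |x ^ α - m ^ α| ≤ m ^ (α - 1) * |x - m| := by
  have hxm : 0 ≤ x / m := div_nonneg hx hm.le
  have h := aux1 hα0 hα1 hxm
  have hdiv : (x / m) ^ α = x ^ α / m ^ α := Real.div_rpow hx hm.le α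
  have hmα : 0 < m ^ α := Real.rpow_pos_of_pos hm α
  have e1 : x ^ α / m ^ α - 1 = (x ^ α - m ^ α) / m ^ α := by field_simp
  have e2 : x / m - 1 = (x - m) / m := by field_simp
  rw [hdiv, e1, e2, abs_div, abs_div, abs_of_pos hmα, abs_of_pos hm,
    div_le_div_iff₀ hmα hm] at h
  rw [Real.rpow_sub hm, Real.rpow_one, div_mul_eq_mul_div, le_div_iff₀ hm]
  linarith

/-- If `Y` is a non-negative real random variable with positive mean and
finite variance, and `α ∈ [0,1]`, then
`Var(Y^α) ≤ E[|Y^α − (E Y)^α|²] ≤ Var(Y) / (E Y)^{2−2α}`. -/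
theorem variance_rpow_le
    {Ω : Type*} [MeasureSpace Ω] [IsProbabilityMeasure (ℙ : Measure Ω)]
    (Y : Ω → ℝ) (hYnn : ∀ ω, 0 ≤ Y ω) (hmeas : Measurable Y)
    (hL2 : MemLp Y 2 ℙ) (hmean : 0 < ∫ ω, Y ω ∂ℙ)
    (α : ℝ) (hα : α ∈ Set.Icc (0 : ℝ) 1) :
    variance (fun ω => Y ω ^ α) ℙ ≤ ∫ ω, |Y ω ^ α - (∫ ω', Y ω' ∂ℙ) ^ α| ^ 2 ∂ℙ
    ∧ ∫ ω, |Y ω ^ α - (∫ ω', Y ω' ∂ℙ) ^ α| ^ 2 ∂ℙ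
        ≤ variance Y ℙ / (∫ ω, Y ω ∂ℙ) ^ (2 - 2 * α) := by
  obtain ⟨hα0, hα1⟩ := hα
  set m : ℝ := ∫ ω, Y ω ∂ℙ with hm_def
  have hm : 0 < m := hmean
  set Z : Ω → ℝ := fun ω => Y ω ^ α with hZ_def
  have hZmeas : Measurable Z := (Real.continuous_rpow_const hα0).measurable.comp hmeas
  have hZL2 : MemLp Z 2 ℙ := by
    refine MemLp.of_le ((memLp_const (1:ℝ)).add hL2) hZmeas.aestronglyMeasurable ?_
    filter_upwards with ω
    have hY := hYnn ω
    have hb : Y ω ^ α ≤ 1 + Y ω := by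
      rcases le_total (Y ω) 1 with h | h
      · have := Real.rpow_le_one hY h hα0
        linarith
      · have : Y ω ^ α ≤ Y ω := by
          simpa using Real.rpow_le_rpow_of_exponent_le h hα1
        linarith
    simp only [Real.norm_eq_abs, Pi.add_apply]
    rw [abs_of_nonneg (Real.rpow_nonneg hY α), abs_of_nonneg (by linarith)]
    exact hb
  have hZint : Integrable Z ℙ := hZL2.integrable one_le_two
  have hZsq : Integrable (fun ω => Z ω ^ 2) ℙ := hZL2.integrable_sq
  set c : ℝ := m ^ α with hc_def
  have hconst : Integrable (fun ω => 2 * c * Z ω) ℙ := hZint.const_mul _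
  have habs : ∀ ω, |Z ω - c| ^ 2 = Z ω ^ 2 - 2 * c * Z ω + c ^ 2 := by
    intro ω; rw [sq_abs]; ring
  have hexp : ∫ ω, |Z ω - c| ^ 2 ∂ℙ = (∫ ω, Z ω ^ 2 ∂ℙ) - 2 * c * (∫ ω, Z ω ∂ℙ) + c ^ 2 := by
    simp_rw [habs]
    have hsub : Integrable (fun ω => Z ω ^ 2 - 2 * c * Z ω) ℙ := hZsq.sub hconst
    rw [integral_add hsub (integrable_const _),
      integral_sub hZsq hconst, integral_const_mul]
    simp [measure_univ]
  constructor
  · rw [variance_eq_sub hZL2, hexp]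
    simp only [Pi.pow_apply]
    nlinarith [sq_nonneg ((∫ ω, Z ω ∂ℙ) - c)]
  · have hYsub : Integrable (fun ω => (Y ω - m) ^ 2) ℙ :=
      (hL2.sub (memLp_const m)).integrable_sq
    have hpt : ∀ ω, |Z ω - c| ^ 2 ≤ m ^ (2 * α - 2) * (Y ω - m) ^ 2 := by
      intro ω
      have h := aux2 hα0 hα1 (hYnn ω) hm
      have hsq : |Z ω - c| ^ 2 ≤ (m ^ (α - 1) * |Y ω - m|) ^ 2 :=
        pow_le_pow_left₀ (abs_nonneg _) h 2
      calc |Z ω - c| ^ 2 ≤ (m ^ (α - 1) * |Y ω - m|) ^ 2 := hsq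
      _ = (m ^ (α - 1)) ^ 2 * (Y ω - m) ^ 2 := by rw [mul_pow, sq_abs]
      _ = m ^ (2 * α - 2) * (Y ω - m) ^ 2 := by
          congr 1
          rw [← Real.rpow_natCast (m ^ (α - 1)) 2, ← Real.rpow_mul hm.le]
          norm_num
          ring_nf
    have hint : ∫ ω, |Z ω - c| ^ 2 ∂ℙ ≤ ∫ ω, m ^ (2 * α - 2) * (Y ω - m) ^ 2 ∂ℙ := by
      apply integral_mono ?_ (hYsub.const_mul _) hpt
      have h' : Integrable (fun ω => (Z ω - c) ^ 2) ℙ := (hZL2.sub (memLp_const c)).integrable_sq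
      exact h'.congr (by filter_upwards with ω; rw [sq_abs])
    have hVarY : variance Y ℙ = ∫ ω, (Y ω - m) ^ 2 ∂ℙ := by
      rw [variance_eq_integral hmeas.aemeasurable]
    calc ∫ ω, |Z ω - c| ^ 2 ∂ℙ ≤ ∫ ω, m ^ (2 * α - 2) * (Y ω - m) ^ 2 ∂ℙ := hint
    _ = m ^ (2 * α - 2) * ∫ ω, (Y ω - m) ^ 2 ∂ℙ := integral_const_mul _ _
    _ = variance Y ℙ / m ^ (2 - 2 * α) := by
        rw [hVarY, div_eq_mul_inv, ← Real.rpow_neg hm.le]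
        rw [show -(2 - 2 * α) = 2 * α - 2 by ring]
        ring
end

section
/- Let 0 < a < b be real numbers, let p ≥ 1 be real, and set q = p/2, κ = √(b/a), ρ = (κ+1)/(κ−1), and U = (b+a)^q. Let 0 < ε ≤ 1, and let N be a natural number satisfying N ≥ log( (4/ε) (κ²+1)^q (κ−1) ( κ^p + √(ε/2 + κ^{2p}) ) ) / log( (κ+1)/(κ−1) ). Let ψ : ℝ → ℝ be any function satisfying sup_{x ∈ [a,b]} |x^q − ψ(x)| ≤ 4U / ((ρ−1) ρ^N). Then for every real symmetric positive definite n×n matrix A whose eigenvalues λ_1, …, λ_n all lie in [a,b], one has | Σ_{j=1}^n ψ(λ_j)² − Σ_{j=1}^n λ_j^p | ≤ (ε/2) Σ_{j=1}^n λ_j^p. -/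
open Matrix

theorem chebyshev_aux
    (a b : ℝ) (ha : 0 < a) (hab : a < b)
    (p : ℝ) (hp : 1 ≤ p)
    (q κ ρ U : ℝ) (hq : q = p / 2) (hκ : κ = Real.sqrt (b / a))
    (hρ : ρ = (κ + 1) / (κ - 1)) (hU : U = (b + a) ^ q)
    (ε : ℝ) (hε0 : 0 < ε) (hε1 : ε ≤ 1)
    (N : ℕ)
    (hN : (N : ℝ) ≥
      Real.log ((4 / ε) * (κ ^ 2 + 1) ^ q * (κ - 1) * (κ ^ p + Real.sqrt (ε / 2 + κ ^ (2 * p))))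
        / Real.log ((κ + 1) / (κ - 1)))
    (ψ : ℝ → ℝ)
    (hψ : ∀ x ∈ Set.Icc a b, |x ^ q - ψ x| ≤ 4 * U / ((ρ - 1) * ρ ^ N))
    {n : ℕ} (μ : Fin n → ℝ)
    (heig : ∀ j, μ j ∈ Set.Icc a b) :
    |∑ j, (ψ (μ j)) ^ 2 - ∑ j, μ j ^ p| ≤ (ε / 2) * ∑ j, μ j ^ p := by
  have hb : 0 < b := ha.trans hab
  have hba : 1 < b / a := (one_lt_div ha).2 hab
  have hκ1 : 1 < κ := by
    rw [hκ]
    have := Real.lt_sqrt (x := 1) (y := b / a) (by norm_num)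
    rw [this]; nlinarith
  have hκ0 : 0 < κ := by linarith
  have hκm1 : κ - 1 ≠ 0 := by intro h; linarith [sub_eq_zero.mp h]
  have hκ2 : κ ^ 2 = b / a := by
    rw [hκ, Real.sq_sqrt (le_of_lt (by positivity))]
  have hq0 : 0 < q := by rw [hq]; linarith
  set s := Real.sqrt (ε / 2 + κ ^ (2 * p)) with hs
  have hκp0 : 0 < κ ^ p := Real.rpow_pos_of_pos hκ0 p
  have h2p : κ ^ (2 * p) = (κ ^ p) ^ 2 := by
    rw [mul_comm, Real.rpow_mul hκ0.le, Real.rpow_two]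
  have hs2 : s ^ 2 = ε / 2 + (κ ^ p) ^ 2 := by
    rw [hs, Real.sq_sqrt (by nlinarith [sq_nonneg (κ ^ p)] : (0:ℝ) ≤ ε / 2 + κ ^ (2*p))]
    rw [h2p]
  have hs0 : 0 ≤ s := Real.sqrt_nonneg _
  have hsκ : κ ^ p < s := by nlinarith
  set M := (4 / ε) * (κ ^ 2 + 1) ^ q * (κ - 1) * (κ ^ p + s) with hM
  have hC0 : 0 < (κ ^ 2 + 1) ^ q := Real.rpow_pos_of_pos (by nlinarith) q
  have hM0 : 0 < M := by
    apply mul_pos (mul_pos (mul_pos (by positivity) hC0) (by linarith)) (by linarith)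
  have hρ1 : 1 < ρ := by rw [hρ, lt_div_iff₀ (by linarith)]; linarith
  have hρ0 : 0 < ρ := by linarith
  have hρN : M ≤ ρ ^ N := by
    have hlρ : 0 < Real.log ρ := Real.log_pos hρ1
    rw [ge_iff_le, ← hρ, div_le_iff₀ hlρ] at hN
    calc M = Real.exp (Real.log M) := (Real.exp_log hM0).symm
      _ ≤ Real.exp ((N : ℝ) * Real.log ρ) := Real.exp_le_exp.2 hN
      _ = ρ ^ N := by rw [← Real.log_pow, Real.exp_log (pow_pos hρ0 N)]
  set δ := 4 * U / ((ρ - 1) * ρ ^ N) with hδ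
  set aq := a ^ q with haq
  have haq0 : 0 < aq := Real.rpow_pos_of_pos ha q
  have hUeq : U = aq * (κ ^ 2 + 1) ^ q := by
    have h1 : κ ^ 2 + 1 = (b + a) / a := by rw [hκ2]; field_simp
    rw [hU, haq, h1, Real.div_rpow (by linarith) ha.le]
    field_simp
  have hU0 : 0 < U := by rw [hUeq]; positivity
  set δ₀ := aq * (s - κ ^ p) with hδ₀
  have hδ₀0 : 0 < δ₀ := mul_pos haq0 (by linarith)
  have hρm1 : ρ - 1 = 2 / (κ - 1) := by rw [hρ]; field_simp; ring
  have hδ0 : 0 ≤ δ :=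
    div_nonneg (by linarith) (le_of_lt (mul_pos (by linarith) (pow_pos hρ0 N)))
  have hδδ₀ : δ ≤ δ₀ := by
    rw [hδ, div_le_iff₀ (mul_pos (by linarith : (0:ℝ) < ρ - 1) (pow_pos hρ0 N))]
    have hsub : (s - κ ^ p) * (s + κ ^ p) = ε / 2 := by linear_combination hs2
    have key : 4 * U = (ρ - 1) * M * δ₀ := by
      have h1 : (ρ - 1) * M * δ₀
          = (8 / ε) * ((κ ^ 2 + 1) ^ q) * aq * ((s - κ ^ p) * (s + κ ^ p)) := by
        rw [hρm1, hM, hδ₀]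
        field_simp
        ring
      rw [h1, hsub, hUeq]
      field_simp
      ring
    calc 4 * U = (ρ - 1) * M * δ₀ := key
      _ ≤ (ρ - 1) * ρ ^ N * δ₀ :=
          mul_le_mul_of_nonneg_right
            (mul_le_mul_of_nonneg_left hρN (by linarith)) hδ₀0.le
      _ = δ₀ * ((ρ - 1) * ρ ^ N) := by ring
  have key : ∀ j, |ψ (μ j) ^ 2 - μ j ^ p| ≤ ε / 2 * μ j ^ p := by
    intro j
    obtain ⟨hja, hjb⟩ := heig j
    have hl0 : 0 < μ j := ha.trans_le hja
    have hψj := hψ (μ j) ⟨hja, hjb⟩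
    set x := μ j ^ q with hx
    set w := ψ (μ j) with hw
    have hlp : μ j ^ p = x ^ 2 := by
      rw [hx, ← Real.rpow_two, ← Real.rpow_mul hl0.le, hq]
      norm_num
    have hx0 : 0 < x := Real.rpow_pos_of_pos hl0 q
    have hxub : x ≤ aq * κ ^ p := by
      have h1 : x ≤ b ^ q := Real.rpow_le_rpow hl0.le hjb hq0.le
      have h2 : b ^ q = aq * κ ^ p := by
        have hp2q : p = 2 * q := by rw [hq]; ring
        rw [hp2q, Real.rpow_mul hκ0.le, Real.rpow_two, hκ2, haq,
          ← Real.mul_rpow ha.le (by positivity)]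
        congr 1
        field_simp
      linarith
    have hxlb : aq ≤ x := Real.rpow_le_rpow ha.le hja hq0.le
    rw [hlp]
    have habs : |w ^ 2 - x ^ 2| ≤ δ * (2 * x + δ) := by
      have h1 : |w ^ 2 - x ^ 2| = |x - w| * |x + w| := by
        rw [← abs_mul, show (x - w) * (x + w) = -(w ^ 2 - x ^ 2) by ring, abs_neg]
      have h2 : |x + w| ≤ 2 * x + δ := by
        have h3 : |w| - |x| ≤ |w - x| := abs_sub_abs_le_abs_sub w x
        rw [abs_sub_comm] at hψj
        rw [abs_of_pos hx0] at h3
        calc |x + w| ≤ |x| + |w| := abs_add_le _ _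
          _ ≤ x + (x + δ) := by rw [abs_of_pos hx0]; linarith
          _ = 2 * x + δ := by ring
      rw [h1]
      exact mul_le_mul hψj h2 (abs_nonneg _) hδ0
    calc |w ^ 2 - x ^ 2| ≤ δ * (2 * x + δ) := habs
      _ ≤ δ₀ * (2 * (aq * κ ^ p) + δ₀) :=
          mul_le_mul hδδ₀ (by linarith) (by positivity) hδ₀0.le
      _ = aq ^ 2 * (s ^ 2 - (κ ^ p) ^ 2) := by rw [hδ₀]; ring
      _ = ε / 2 * aq ^ 2 := by rw [hs2]; ring
      _ ≤ ε / 2 * x ^ 2 := by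
          have h4 : aq ^ 2 ≤ x ^ 2 := pow_le_pow_left₀ haq0.le hxlb 2
          have h5 : (0:ℝ) ≤ ε / 2 := by linarith
          exact mul_le_mul_of_nonneg_left h4 h5
  calc |∑ j, ψ (μ j) ^ 2 - ∑ j, μ j ^ p| = |∑ j, (ψ (μ j) ^ 2 - μ j ^ p)| := by
        rw [Finset.sum_sub_distrib]
    _ ≤ ∑ j, |ψ (μ j) ^ 2 - μ j ^ p| := Finset.abs_sum_le_sum_abs _ _
    _ ≤ ∑ j, ε / 2 * μ j ^ p := Finset.sum_le_sum fun j _ => key j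
    _ = ε / 2 * ∑ j, μ j ^ p := by rw [Finset.mul_sum]

/-- Let `0 < a < b`, `p ≥ 1`, `q = p/2`, `κ = √(b/a)`, `ρ = (κ+1)/(κ−1)`,
`U = (b+a)^q`, and `0 < ε ≤ 1`. If `N` satisfies the stated logarithmic lower bound and
`ψ : ℝ → ℝ` satisfies `sup_{x ∈ [a,b]} |x^q − ψ(x)| ≤ 4U/((ρ−1)ρ^N)`, then for every SPD
matrix `A` with eigenvalues `λ_j ∈ [a,b]`,
`|∑_j ψ(λ_j)² − ∑_j λ_j^p| ≤ (ε/2) ∑_j λ_j^p`. -/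
theorem chebyshev_trace_relative_error
    (a b : ℝ) (ha : 0 < a) (hab : a < b)
    (p : ℝ) (hp : 1 ≤ p)
    (q κ ρ U : ℝ) (hq : q = p / 2) (hκ : κ = Real.sqrt (b / a))
    (hρ : ρ = (κ + 1) / (κ - 1)) (hU : U = (b + a) ^ q)
    (ε : ℝ) (hε0 : 0 < ε) (hε1 : ε ≤ 1)
    (N : ℕ)
    (hN : (N : ℝ) ≥
      Real.log ((4 / ε) * (κ ^ 2 + 1) ^ q * (κ - 1) * (κ ^ p + Real.sqrt (ε / 2 + κ ^ (2 * p))))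
        / Real.log ((κ + 1) / (κ - 1)))
    (ψ : ℝ → ℝ)
    (hψ : ∀ x ∈ Set.Icc a b, |x ^ q - ψ x| ≤ 4 * U / ((ρ - 1) * ρ ^ N))
    {n : ℕ} (A : Matrix (Fin n) (Fin n) ℝ) (hA : A.PosDef)
    (heig : ∀ j, hA.1.eigenvalues j ∈ Set.Icc a b) :
    |∑ j, (ψ (hA.1.eigenvalues j)) ^ 2 - ∑ j, hA.1.eigenvalues j ^ p|
      ≤ (ε / 2) * ∑ j, hA.1.eigenvalues j ^ p :=
  chebyshev_aux a b ha hab p hp q κ ρ U hq hκ hρ hU ε hε0 hε1 N hN ψ hψ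
    (hA.1.eigenvalues) heig
end
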